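/- arXiv:2511.15729 — 4 statements merged into one kernel-verified Lean document; each statement's English description precedes it below -/
import Mathlib

section
/- For integers n ≥ 1, m ≥ 0, k ≥ 1, the k-fold nested sum F(n,m,k) defined recursively by F(n,m,1) = ∑_{i=1}^n i^m and F(n,m,k) = ∑_{t=1}^n F(t,m,k-1) for k ≥ 2, satisfies the closed form F(n,m,k) = ∑_{r=1}^n C(n-r+k-1, k-1) · r^m. -/
open Finset

/-- The k-fold nested power sum defined recursively. -/
def nestedSum : ℕ → ℕ → ℕ → ℕ
  | _, _, 0 => 0
  | n, m, 1 => ∑ i ∈ Finset.Icc 1 n, i ^ m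
  | n, m, (k + 2) => ∑ t ∈ Finset.Icc 1 n, nestedSum t m (k + 1)

lemma hockey (r n k : ℕ) (hr : r ≤ n) :
    ∑ t ∈ Finset.Icc r n, (t - r + k).choose k = (n - r + k + 1).choose (k + 1) := by
  have : ∑ t ∈ Finset.Icc r n, (t - r + k).choose k
      = ∑ i ∈ Finset.Icc k (n - r + k), i.choose k := by
    apply Finset.sum_bij' (fun t _ => t - r + k) (fun i _ => i - k + r)
    · intro a ha; simp only [Finset.mem_Icc] at *; omega
    · intro a ha; simp only [Finset.mem_Icc] at *; omega
    · intro a ha; simp only [Finset.mem_Icc] at ha; omega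
    · intro a ha; simp only [Finset.mem_Icc] at ha; omega
    · intro a ha; rfl
  rw [this, Nat.sum_Icc_choose]

theorem nestedSum_closed_form (n m k : ℕ) (hn : 1 ≤ n) (hk : 1 ≤ k) :
    nestedSum n m k = ∑ r ∈ Finset.Icc 1 n, (n - r + k - 1).choose (k - 1) * r ^ m := by
  obtain ⟨k, rfl⟩ : ∃ j, k = j + 1 := ⟨k - 1, by omega⟩
  clear hk
  induction k generalizing n with
  | zero => simp [nestedSum]
  | succ j ih =>
    show (∑ t ∈ Finset.Icc 1 n, nestedSum t m (j + 1)) = _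
    have : (∑ t ∈ Finset.Icc 1 n, nestedSum t m (j + 1))
        = ∑ t ∈ Finset.Icc 1 n, ∑ r ∈ Finset.Icc 1 t, (t - r + j).choose j * r ^ m := by
      apply Finset.sum_congr rfl
      intro t ht
      simp only [Finset.mem_Icc] at ht
      rw [ih t ht.1]
      simp
    rw [this, Finset.sum_comm' (t' := Finset.Icc 1 n) (s' := fun r => Finset.Icc r n)
      (by intro t r; simp only [Finset.mem_Icc]; omega)]
    apply Finset.sum_congr rfl
    intro r hr
    simp only [Finset.mem_Icc] at hr
    rw [← Finset.sum_mul]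
    congr 1
    have := hockey r n j hr.2
    simpa [Nat.add_assoc] using this
end

section
/- For all integers n ≥ 1, k ≥ 1, and m ≥ 1, the nested power sum satisfies the recurrence F(n,m,k) = n · F(n,m-1,k) - k · F(n-1,m-1,k+1). -/
open Finset

/-- The k-fold nested power sum, closed form. -/
def F (n m k : ℕ) : ℕ := ∑ r ∈ Finset.Icc 1 n, (n - r + k - 1).choose (k - 1) * r ^ m

theorem nested_sum_recurrence (n m k : ℕ) (hn : 1 ≤ n) (hm : 1 ≤ m) (hk : 1 ≤ k) :
    (F n m k : ℤ) = (n : ℤ) * F n (m - 1) k - (k : ℤ) * F (n - 1) (m - 1) (k + 1) := by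
  obtain ⟨l, rfl⟩ : ∃ l, m = l + 1 := ⟨m - 1, by omega⟩
  obtain ⟨j, rfl⟩ : ∃ j, k = j + 1 := ⟨k - 1, by omega⟩
  obtain ⟨n', rfl⟩ : ∃ n', n = n' + 1 := ⟨n - 1, by omega⟩
  have key : F (n'+1) (l+1) (j+1) + (j+1) * F n' l (j+2)
      = (n'+1) * F (n'+1) l (j+1) := by
    unfold F
    rw [Finset.mul_sum, Finset.mul_sum,
        Finset.sum_Icc_succ_top (by omega : 1 ≤ n'+1),
        Finset.sum_Icc_succ_top (by omega : 1 ≤ n'+1)]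
    have htop : (n'+1 - (n'+1) + (j+1) - 1).choose (j+1-1) * (n'+1) ^ (l+1)
        = (n'+1) * ((n'+1 - (n'+1) + (j+1) - 1).choose (j+1-1) * (n'+1) ^ l) := by
      simp [pow_succ]
      ring
    rw [add_right_comm, htop]
    congr 1
    · rw [← Finset.sum_add_distrib]
      apply Finset.sum_congr rfl
      intro r hr
      simp only [Finset.mem_Icc] at hr
      obtain ⟨a, rfl⟩ : ∃ a, n' = r + a := ⟨n' - r, by omega⟩
      have e1 : r + a + 1 - r + (j+1) - 1 = a + j + 1 := by omega
      have e2 : r + a - r + (j+2) - 1 = a + j + 1 := by omega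
      have e3 : j + 2 - 1 = j + 1 := by omega
      have e4 : j + 1 - 1 = j := by omega
      rw [e1, e2, e3, e4]
      have h : (j+1) * ((a+j+1).choose (j+1)) = (a+1) * ((a+j+1).choose j) := by
        rw [mul_comm, Nat.choose_succ_right_eq]
        rw [mul_comm]
        congr 1
        omega
      calc (a+j+1).choose j * r ^ (l+1) + (j+1) * ((a+j+1).choose (j+1) * r ^ l)
          = (a+j+1).choose j * (r ^ l * r) + ((j+1) * ((a+j+1).choose (j+1))) * r ^ l := by
            rw [pow_succ]; ring
        _ = (a+j+1).choose j * (r ^ l * r) + ((a+1) * ((a+j+1).choose j)) * r ^ l := by rw [h]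
        _ = (r + a + 1) * ((a+j+1).choose j * r ^ l) := by ring
  have hk : (F (n'+1) (l+1) (j+1) : ℤ) + (j+1) * F n' l (j+2)
      = (n'+1) * F (n'+1) l (j+1) := by exact_mod_cast congrArg (Nat.cast : ℕ → ℤ) key
  simp only [add_tsub_cancel_right]
  push_cast at hk ⊢
  linarith
end

section
/- For integers n ≥ 1, k ≥ 1, m ≥ 0, the hypersum recurrence (n + k) · F(n,m,k) = k · F(n,m,k+1) + F(n,m+1,k) holds. -/
open Finset

theorem cereceda_recurrence (n m k : ℕ) (hn : 1 ≤ n) (hk : 1 ≤ k) :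
    (n + k) * F n m k = k * F n m (k + 1) + F n (m + 1) k := by
  obtain ⟨j, rfl⟩ : ∃ j, k = j + 1 := ⟨k - 1, (Nat.succ_pred_eq_of_pos hk).symm⟩
  unfold F
  simp only [Nat.add_sub_cancel]
  rw [Finset.mul_sum, Finset.mul_sum, ← Finset.sum_add_distrib]
  refine Finset.sum_congr rfl fun r hr => ?_
  simp only [Finset.mem_Icc] at hr
  obtain ⟨hr1, hrn⟩ := hr
  have ha : n = (n - r) + r := by omega
  set a := n - r with haa
  have key : (a + j + 1) * Nat.choose (a + j) j
      = Nat.choose (a + j + 1) (j + 1) * (j + 1) := Nat.add_one_mul_choose_eq (a + j) j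
  have h1 : n - r + (j + 1 + 1) - 1 = a + j + 1 := by omega
  have h2 : a + (j + 1) - 1 = a + j := by omega
  rw [h1, h2, ha]
  ring_nf
  have e1 : (1 + a + j).choose (1 + j) = (a + j + 1).choose (j + 1) := by ring_nf
  rw [e1]
  have key2 : r ^ m * ((a + j + 1) * (a + j).choose j)
      = r ^ m * ((a + j + 1).choose (j + 1) * (j + 1)) := by rw [key]
  nlinarith [key2]
end

section
/- Assuming the difference identity F(n,m,k) - F(n-1,m,k) = F(n,m,k-1) for k ≥ 2, the recurrence F(n,m,k) = n·F(n,m-1,k) - k·F(n-1,m-1,k+1) (for n, m, k ≥ 1) is equivalent to Cereceda's recurrence (n+k)·F(n,m,k) = k·F(n,m,k+1) + F(n,m+1,k) (for n ≥ 1, k ≥ 1, m ≥ 0): each family of identities implies the other. -/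
/- Both recurrences express `F n (m + 1) k` through level `m`; they differ by `k` times the
difference identity at nesting level `k + 1`, so they agree instance by instance. -/

theorem recurrence_iff_cereceda_of_diff (F : ℕ → ℕ → ℕ → ℤ) {n m k : ℕ}
    (hdiff : F n m (k + 1) - F (n - 1) m (k + 1) = F n m k) :
    F n (m + 1) k = (n : ℤ) * F n m k - (k : ℤ) * F (n - 1) m (k + 1) ↔
      ((n : ℤ) + k) * F n m k = (k : ℤ) * F n m (k + 1) + F n (m + 1) k := by
  constructor <;> intro h <;> linear_combination -h - (k : ℤ) * hdiff

theorem recurrences_equivalent (F : ℕ → ℕ → ℕ → ℤ)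
    (hdiff : ∀ n m k : ℕ, 1 ≤ n → 2 ≤ k → F n m k - F (n - 1) m k = F n m (k - 1)) :
    (∀ n m k : ℕ, 1 ≤ n → 1 ≤ m → 1 ≤ k →
        F n m k = (n : ℤ) * F n (m - 1) k - (k : ℤ) * F (n - 1) (m - 1) (k + 1)) ↔
    (∀ n m k : ℕ, 1 ≤ n → 1 ≤ k →
        ((n : ℤ) + k) * F n m k = (k : ℤ) * F n m (k + 1) + F n (m + 1) k) := by
  have hdiff_succ : ∀ n m k : ℕ, 1 ≤ n → 1 ≤ k →
      F n m (k + 1) - F (n - 1) m (k + 1) = F n m k := fun n m k hn hk => by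
    simpa using hdiff n m (k + 1) hn (by omega)
  constructor
  · intro hrec n m k hn hk
    refine (recurrence_iff_cereceda_of_diff F (hdiff_succ n m k hn hk)).1 ?_
    simpa using hrec n (m + 1) k hn (by omega) hk
  · intro hcer n m k hn hm hk
    obtain ⟨m, rfl⟩ : ∃ m', m = m' + 1 := ⟨m - 1, by omega⟩
    simpa using (recurrence_iff_cereceda_of_diff F (hdiff_succ n m k hn hk)).2 (hcer n m k hn hk)
end
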